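/- Let H be a self-adjoint operator on ℓ²(G) for a countable set G with metric d, essentially self-adjoint on finitely supported vectors, with M_α := sup_n (∑_{m≠n} |⟨n|H|m⟩|² e^{α d(n,m)})^{1/2} < ∞ for some α > 0. Suppose the function F_μ(m) = (∑_{n: ⟨n|H|m⟩≠0} e^{−μ d(n,m)})^{1/2} (for some μ < α) is relatively H-bounded: ‖F_μ ψ‖ ≤ a‖Hψ‖ + b‖ψ‖. Then for z ∉ σ(H), ν ≥ 0 with ν < ((α−μ)/(2M_α))·min{M_α, 1/a, 1/(a‖H(H−z)^{−1}‖ + b‖(H−z)^{−1}‖)}, and subsets S, T ⊆ G: ‖P_S (H−z)^{−1} P_T‖ ≤ A_{z;ν} e^{−ν d(S,T)}, where A_{z;ν} = ‖(H−z)^{−1}‖ / (1 − (2M_α ν/(α−μ))(a‖H(H−z)^{−1}‖ + b‖(H−z)^{−1}‖)). -/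

import Mathlib

open scoped InnerProductSpace ENNReal

/-- Matrix elements ⟨n|H|m⟩ = ⟨δ_n, H δ_m⟩ of an operator on ℓ²(G). -/
noncomputable def Hmat {G : Type*} [DecidableEq G]
    (H : lp (fun _ : G => ℂ) 2 →L[ℂ] lp (fun _ : G => ℂ) 2) (n m : G) : ℂ :=
  ⟪lp.single 2 n (1 : ℂ), H (lp.single 2 m (1 : ℂ))⟫_ℂ

/-!
Conjugate `H` by the multiplication operators `e^{±ν h}` with `h = min (d(·, T), d(S, T))`, which is
1-Lipschitz, vanishes on `T` and equals `d(S, T)` on `S`. The conjugate is `H + B`, where `B` has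
kernel `(e^{ν (h n - h m)} - 1) ⟨n|H|m⟩`. Convexity of `exp` bounds the first factor by
`(2ν/(α-μ)) e^{(α-μ) d(n,m)/2}`, and a Schur-type Cauchy–Schwarz estimate that splits this weight
between the `M_α` row sums and the `F_μ` column sums gives
`‖B χ‖ ≤ (2 M_α ν/(α-μ)) (a ‖H χ‖ + b ‖χ‖)`. Hence `‖B (H - z)⁻¹‖ < 1`, and a Neumann series
inverts `e^{ν h} (H - z) e^{-ν h} = (1 + B (H - z)⁻¹) (H - z)`. Sandwiching between vectors
supported in `S` and `T` produces the factor `e^{-ν d(S, T)}`.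
-/

namespace CombesThomas

lemma abs_exp_sub_one_le_exp_abs_sub_one (x : ℝ) : |Real.exp x - 1| ≤ Real.exp |x| - 1 := by
  simpa [← Complex.ofReal_exp, ← Complex.ofReal_one, ← Complex.ofReal_sub, Complex.norm_real]
    using Complex.norm_exp_sub_sum_le_exp_norm_sub_sum (x : ℂ) 1

lemma exp_mul_sub_one_le {ν β : ℝ} (hν : 0 ≤ ν) (hνβ : ν ≤ β) (hβ : 0 < β) (t : ℝ) :
    Real.exp (ν * t) - 1 ≤ ν / β * (Real.exp (β * t) - 1) := by
  have hθ : ν / β ≤ 1 := (div_le_one hβ).2 hνβ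
  have := convexOn_exp.2 (Set.mem_univ 0) (Set.mem_univ (β * t)) (sub_nonneg.2 hθ)
    (div_nonneg hν hβ.le) (sub_add_cancel 1 _)
  simp only [smul_eq_mul, mul_zero, zero_add, Real.exp_zero, mul_one] at this
  rw [show ν / β * (β * t) = ν * t by field_simp] at this
  linarith

lemma abs_exp_sub_one_le_of_abs_le {x t ν β : ℝ} (hν : 0 ≤ ν) (hνβ : ν ≤ β) (hβ : 0 < β)
    (hx : |x| ≤ ν * t) : |Real.exp x - 1| ≤ ν / β * Real.exp (β * t) := calc
  |Real.exp x - 1| ≤ Real.exp |x| - 1 := abs_exp_sub_one_le_exp_abs_sub_one x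
  _ ≤ Real.exp (ν * t) - 1 := by gcongr
  _ ≤ ν / β * (Real.exp (β * t) - 1) := exp_mul_sub_one_le hν hνβ hβ t
  _ ≤ ν / β * Real.exp (β * t) := by gcongr; linarith [div_nonneg hν hβ.le]

lemma norm_sum_mul_sq_le {κ 𝕜 : Type*} [RCLike 𝕜] (t : Finset κ) (k y : κ → 𝕜) {U V : κ → ℝ}
    (hU : ∀ m, 0 ≤ U m) (hV : ∀ m, 0 ≤ V m) (hk : ∀ m, ‖k m‖ ^ 2 ≤ U m * V m) :
    ‖∑ m ∈ t, k m * y m‖ ^ 2 ≤ (∑ m ∈ t, U m) * ∑ m ∈ t, V m * ‖y m‖ ^ 2 := by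
  have hpt : ∀ m, ‖k m * y m‖ ≤ √(U m) * √(V m * ‖y m‖ ^ 2) := fun m => by
    rw [← Real.sqrt_mul (hU m), ← mul_assoc, norm_mul]
    refine Real.le_sqrt_of_sq_le ?_
    rw [mul_pow]
    exact mul_le_mul_of_nonneg_right (hk m) (by positivity)
  have hcs := (norm_sum_le _ _).trans <| (Finset.sum_le_sum fun m _ => hpt m).trans <|
    Real.sum_sqrt_mul_sqrt_le t hU fun m => mul_nonneg (hV m) (by positivity)
  calc ‖∑ m ∈ t, k m * y m‖ ^ 2
      ≤ (√(∑ m ∈ t, U m) * √(∑ m ∈ t, V m * ‖y m‖ ^ 2)) ^ 2 := by gcongr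
    _ = _ := by
      rw [mul_pow, Real.sq_sqrt (Finset.sum_nonneg fun m _ => hU m),
        Real.sq_sqrt (Finset.sum_nonneg fun m _ => mul_nonneg (hV m) (by positivity))]

lemma sum_le_of_tsum_ofReal_le {ι : Type*} {w : ι → ℝ} (hw : ∀ i, 0 ≤ w i) {X : ℝ}
    (hX : 0 ≤ X) (h : ∑' i, ENNReal.ofReal (w i) ≤ ENNReal.ofReal X) (t : Finset ι) :
    ∑ i ∈ t, w i ≤ X := by
  rw [← ENNReal.ofReal_le_ofReal_iff hX, ENNReal.ofReal_sum_of_nonneg fun i _ => hw i]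
  exact (ENNReal.sum_le_tsum t).trans h

lemma sInf_image_dist_prod_le_infDist {X : Type*} [PseudoMetricSpace X] {S T : Set X} {x : X}
    (hx : x ∈ S) : sInf ((fun p : X × X => dist p.1 p.2) '' S ×ˢ T) ≤ Metric.infDist x T := by
  rcases T.eq_empty_or_nonempty with rfl | hT
  · simp
  refine (Metric.le_infDist hT).2 fun y hy => csInf_le ⟨0, ?_⟩ ⟨(x, y), ⟨hx, hy⟩, rfl⟩
  rintro _ ⟨p, _, rfl⟩
  exact dist_nonneg

lemma norm_inverse_one_add_le {A : Type*} [NormedRing A] [HasSummableGeomSeries A]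
    (h1 : ‖(1 : A)‖ ≤ 1) {y : A} (hy : ‖y‖ < 1) :
    ‖Ring.inverse (1 + y)‖ ≤ (1 - ‖y‖)⁻¹ := by
  have hy' : ‖-y‖ < 1 := by rwa [norm_neg]
  rw [← sub_neg_eq_add, NormedRing.inverse_one_sub _ hy']
  have := tsum_geometric_le_of_norm_lt_one (-y) hy'
  rw [norm_neg] at this
  exact this.trans (by linarith)

lemma norm_mul_inverse_mul_le {A : Type*} [NormedRing A] [HasSummableGeomSeries A]
    (h1 : ‖(1 : A)‖ ≤ 1) {K U V : A} (hK : IsUnit K) (hUV : U * V = 1) (hVU : V * U = 1)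
    {c : ℝ} (hc : ‖(U * K * V - K) * Ring.inverse K‖ ≤ c) (hc1 : c < 1) :
    ‖U * Ring.inverse K * V‖ ≤ ‖Ring.inverse K‖ / (1 - c) := by
  set R := Ring.inverse K
  set y := (U * K * V - K) * R
  have hy : ‖y‖ < 1 := hc.trans_lt hc1
  have hunit : IsUnit (1 + y) := by
    have := (Units.oneSub (-y) (by rwa [norm_neg])).isUnit
    rwa [Units.val_oneSub, sub_neg_eq_add] at this
  have hconj : U * K * V = (1 + y) * K := by
    simp only [y, R, add_mul, one_mul, mul_assoc, Ring.inverse_mul_cancel K hK, mul_one]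
    abel
  have hleft : U * R * V * (U * K * V) = 1 := by
    simp only [mul_assoc]
    rw [← mul_assoc V U, hVU, one_mul, ← mul_assoc R K, Ring.inverse_mul_cancel K hK, one_mul, hUV]
  have hright : U * K * V * (R * Ring.inverse (1 + y)) = 1 := by
    rw [hconj, mul_assoc, ← mul_assoc K, Ring.mul_inverse_cancel K hK, one_mul,
      Ring.mul_inverse_cancel _ hunit]
  rw [left_inv_eq_right_inv hleft hright, div_eq_mul_inv]
  calc ‖R * Ring.inverse (1 + y)‖ ≤ ‖R‖ * ‖Ring.inverse (1 + y)‖ := norm_mul_le _ _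
    _ ≤ ‖R‖ * (1 - c)⁻¹ := by
      gcongr
      exact (norm_inverse_one_add_le h1 hy).trans (by gcongr)

lemma norm_mul_le_of_forall_norm_apply_le {𝕜 E : Type*} [RCLike 𝕜] [NormedAddCommGroup E]
    [NormedSpace 𝕜 E] {B H : E →L[𝕜] E} {c a b : ℝ} (hc : 0 ≤ c) (ha : 0 ≤ a) (hb : 0 ≤ b)
    (hB : ∀ χ, ‖B χ‖ ≤ c * (a * ‖H χ‖ + b * ‖χ‖)) (R : E →L[𝕜] E) :
    ‖B * R‖ ≤ c * (a * ‖H ∘L R‖ + b * ‖R‖) :=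
  ContinuousLinearMap.opNorm_le_bound _ (by positivity) fun ξ => calc
    ‖B (R ξ)‖ ≤ c * (a * ‖(H ∘L R) ξ‖ + b * ‖R ξ‖) := hB (R ξ)
    _ ≤ c * (a * (‖H ∘L R‖ * ‖ξ‖) + b * (‖R‖ * ‖ξ‖)) := by
      gcongr
      · exact (H ∘L R).le_opNorm ξ
      · exact R.le_opNorm ξ
    _ = c * (a * ‖H ∘L R‖ + b * ‖R‖) * ‖ξ‖ := by ring

local notation "ℓ²(" G ")" => lp (fun _ : G => ℂ) 2

variable {G : Type*}

lemma norm_le_of_forall_sum_sq_le {f : ℓ²(G)} {C : ℝ} (hC : 0 ≤ C)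
    (hf : ∀ s : Finset G, ∑ n ∈ s, ‖f n‖ ^ 2 ≤ C ^ 2) : ‖f‖ ≤ C :=
  lp.norm_le_of_forall_sum_le (p := 2) (by norm_num) hC (by simpa using hf)

lemma le_of_forall_finsupp {u v : ℓ²(G) → ℝ} (hu : Continuous u) (hv : Continuous v)
    (h : ∀ (t : Finset G) (χ : ℓ²(G)), (∀ m ∉ t, χ m = 0) → u χ ≤ v χ) (χ : ℓ²(G)) :
    u χ ≤ v χ := by
  classical
  have hχ := lp.hasSum_single (p := 2) (by norm_num) χ
  refine le_of_tendsto_of_tendsto' ((hu.tendsto χ).comp hχ) ((hv.tendsto χ).comp hχ) fun t => ?_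
  refine h t _ fun m hm => ?_
  rw [lp.coeFn_sum, Finset.sum_apply]
  exact Finset.sum_eq_zero fun n hn => lp.single_apply_ne 2 n _ (ne_of_mem_of_not_mem hn hm).symm

noncomputable def expMul (f : G → ℝ) {C : ℝ} (hf : ∀ n, f n ≤ C) : ℓ²(G) →L[ℂ] ℓ²(G) :=
  lp.mapCLM 2 (fun n => (Real.exp (f n) : ℂ) • ContinuousLinearMap.id ℂ ℂ) (Real.exp_pos C).le
    fun n => calc
      _ ≤ ‖(Real.exp (f n) : ℂ)‖ * ‖ContinuousLinearMap.id ℂ ℂ‖ := norm_smul_le _ _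
      _ ≤ Real.exp C * 1 := by
        gcongr
        · simpa [Complex.norm_real, Real.abs_exp] using hf n
        · exact ContinuousLinearMap.norm_id_le
      _ = Real.exp C := mul_one _

@[simp]
lemma expMul_apply (f : G → ℝ) {C : ℝ} (hf : ∀ n, f n ≤ C) (χ : ℓ²(G)) (n : G) :
    expMul f hf χ n = Real.exp (f n) * χ n :=
  rfl

section expMul

variable {f : G → ℝ} {C : ℝ} (hf : ∀ n, f n ≤ C)

lemma expMul_mul_expMul {g : G → ℝ} {C' : ℝ} (hg : ∀ n, g n ≤ C') (hfg : ∀ n, f n + g n = 0) :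
    expMul f hf * expMul g hg = 1 := by
  ext χ n
  simp only [mul_apply_eq_comp, one_apply_eq_self, expMul_apply,
    ← mul_assoc, ← Complex.ofReal_mul, ← Real.exp_add, hfg, Real.exp_zero, Complex.ofReal_one,
    one_mul]

lemma inner_expMul_left (φ ξ : ℓ²(G)) : ⟪expMul f hf φ, ξ⟫_ℂ = ⟪φ, expMul f hf ξ⟫_ℂ := by
  simp only [lp.inner_eq_tsum, expMul_apply]
  exact tsum_congr fun n => by simp only [RCLike.inner_apply, map_mul, Complex.conj_ofReal]; ring

lemma expMul_eq_smul {S : Set G} {c : ℝ} (hfS : ∀ n ∈ S, f n = c) {φ : ℓ²(G)}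
    (hφ : ∀ n ∉ S, φ n = 0) : expMul f hf φ = (Real.exp c : ℂ) • φ := by
  ext n
  by_cases hn : n ∈ S
  · simp [hfS n hn]
  · simp [hφ n hn]

end expMul

lemma inner_apply_eq_exp_mul_inner_conj {f : G → ℝ} {C C' : ℝ} (hf : ∀ n, f n ≤ C)
    (hg : ∀ n, -f n ≤ C') (A : ℓ²(G) →L[ℂ] ℓ²(G)) {S T : Set G} {c : ℝ}
    (hS : ∀ n ∈ S, f n = c) (hT : ∀ n ∈ T, f n = 0) {φ ψ : ℓ²(G)} (hφ : ∀ n ∉ S, φ n = 0)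
    (hψ : ∀ n ∉ T, ψ n = 0) :
    ⟪φ, A ψ⟫_ℂ = Real.exp (-c) * ⟪φ, (expMul f hf * A * expMul (fun n => -f n) hg) ψ⟫_ℂ := by
  set W := expMul f hf
  set W' := expMul (fun n => -f n) hg
  have hW'W : W' * W = 1 := expMul_mul_expMul hg hf fun n => neg_add_cancel (f n)
  have hA : A = W' * (W * A * W') * W := by
    simp only [← mul_assoc, hW'W, one_mul]
    rw [mul_assoc, hW'W, mul_one]
  have hφ' : W' φ = (Real.exp (-c) : ℂ) • φ :=
    expMul_eq_smul hg (fun n hn => by rw [hS n hn]) hφ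
  have hψ' : W ψ = ψ := by
    rw [expMul_eq_smul hf hT hψ, Real.exp_zero, Complex.ofReal_one, one_smul]
  conv_lhs => rw [hA]
  rw [mul_apply_eq_comp, mul_apply_eq_comp, ← inner_expMul_left, hφ', hψ', inner_smul_left,
    Complex.conj_ofReal]

variable [DecidableEq G]

lemma eq_sum_single {t : Finset G} {χ : ℓ²(G)} (hχ : ∀ m ∉ t, χ m = 0) :
    χ = ∑ m ∈ t, lp.single 2 m (χ m) :=
  (lp.hasSum_single (p := 2) (by norm_num) χ).unique <|
    hasSum_sum_of_ne_finset_zero fun m hm => by rw [hχ m hm, lp.single_zero]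

lemma apply_eq_sum (A : ℓ²(G) →L[ℂ] ℓ²(G)) {t : Finset G} {χ : ℓ²(G)}
    (hχ : ∀ m ∉ t, χ m = 0) (n : G) :
    A χ n = ∑ m ∈ t, A (lp.single 2 m 1) n * χ m := by
  conv_lhs => rw [eq_sum_single hχ]
  simp only [map_sum, lp.coeFn_sum, Finset.sum_apply]
  refine Finset.sum_congr rfl fun m _ => ?_
  have : lp.single 2 m (χ m) = χ m • lp.single (E := fun _ : G => ℂ) 2 m 1 := by
    rw [← lp.single_smul, smul_eq_mul, mul_one]
  rw [this, map_smul, lp.coeFn_smul, Pi.smul_apply, smul_eq_mul, mul_comm]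

lemma Hmat_eq_apply (H : ℓ²(G) →L[ℂ] ℓ²(G)) (n m : G) :
    Hmat H n m = H (lp.single 2 m 1) n := by
  simp [Hmat, lp.inner_single_left]

lemma expMul_conj_sub_single_apply {h : G → ℝ} {ν C C' : ℝ} (hf : ∀ n, ν * h n ≤ C)
    (hg : ∀ n, -(ν * h n) ≤ C') (H : ℓ²(G) →L[ℂ] ℓ²(G)) (m n : G) :
    (expMul (fun n => ν * h n) hf * H * expMul (fun n => -(ν * h n)) hg - H) (lp.single 2 m 1) n
      = ((Real.exp (ν * (h n - h m)) - 1 : ℝ) : ℂ) * Hmat H n m := by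
  have : expMul (fun n => -(ν * h n)) hg (lp.single 2 m 1)
      = (Real.exp (-(ν * h m)) : ℂ) • lp.single 2 m 1 :=
    expMul_eq_smul hg (S := {m}) (fun n hn => by rw [hn]) fun n hn => lp.single_apply_ne 2 m _ hn
  simp only [sub_apply, mul_apply_eq_comp, this, map_smul, lp.coeFn_sub,
    Pi.sub_apply, expMul_apply, lp.coeFn_smul, Pi.smul_apply, smul_eq_mul, Hmat_eq_apply]
  rw [show ν * (h n - h m) = ν * h n + -(ν * h m) by ring, Real.exp_add]
  push_cast
  ring

lemma norm_apply_le_of_schur (A : ℓ²(G) →L[ℂ] ℓ²(G)) {t : Finset G} {χ : ℓ²(G)}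
    (hχ : ∀ m ∉ t, χ m = 0) {U V : G → G → ℝ} (hU : ∀ n m, 0 ≤ U n m) (hV : ∀ n m, 0 ≤ V n m)
    (hA : ∀ n m, ‖A (lp.single 2 m 1) n‖ ^ 2 ≤ U n m * V n m) {M C : ℝ} (hM : 0 ≤ M)
    (hC : 0 ≤ C) (hrow : ∀ n, ∑ m ∈ t, U n m ≤ M ^ 2)
    (hcol : ∀ s : Finset G, ∑ m ∈ t, (∑ n ∈ s, V n m) * ‖χ m‖ ^ 2 ≤ C ^ 2) :
    ‖A χ‖ ≤ M * C :=
  norm_le_of_forall_sum_sq_le (by positivity) fun s => calc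
    ∑ n ∈ s, ‖A χ n‖ ^ 2 = ∑ n ∈ s, ‖∑ m ∈ t, A (lp.single 2 m 1) n * χ m‖ ^ 2 := by
      simp only [apply_eq_sum A hχ]
    _ ≤ ∑ n ∈ s, (∑ m ∈ t, U n m) * ∑ m ∈ t, V n m * ‖χ m‖ ^ 2 :=
      Finset.sum_le_sum fun n _ => norm_sum_mul_sq_le t _ _ (hU n) (hV n) (hA n)
    _ ≤ ∑ n ∈ s, M ^ 2 * ∑ m ∈ t, V n m * ‖χ m‖ ^ 2 := by
      gcongr with n
      · exact Finset.sum_nonneg fun m _ => mul_nonneg (hV n m) (by positivity)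
      · exact hrow n
    _ = M ^ 2 * ∑ m ∈ t, (∑ n ∈ s, V n m) * ‖χ m‖ ^ 2 := by
      rw [← Finset.mul_sum, Finset.sum_comm]
      simp only [Finset.sum_mul]
    _ ≤ M ^ 2 * C ^ 2 := by gcongr; exact hcol s
    _ = (M * C) ^ 2 := by ring

section kernel

variable [MetricSpace G] (H : ℓ²(G) →L[ℂ] ℓ²(G))

/-- Summed over `m`, this is the quantity whose supremum over `n` is `M_α²`; summed over `n`,
`supportWeight H μ n m` is `F_μ(m)²`. -/
noncomputable def offDiagWeight (α : ℝ) (n m : G) : ℝ :=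
  Set.indicator {m' : G | m' ≠ n} (fun m' => ‖Hmat H n m'‖ ^ 2 * Real.exp (α * dist n m')) m

noncomputable def supportWeight (μ : ℝ) (n m : G) : ℝ :=
  Set.indicator {n' : G | Hmat H n' m ≠ 0} (fun n' => Real.exp (-μ * dist n' m)) n

variable {H}

lemma offDiagWeight_nonneg (α : ℝ) (n m : G) : 0 ≤ offDiagWeight H α n m :=
  Set.indicator_nonneg (fun _ _ => by positivity) m

lemma supportWeight_nonneg (μ : ℝ) (n m : G) : 0 ≤ supportWeight H μ n m :=
  Set.indicator_nonneg (fun _ _ => by positivity) n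

lemma norm_sq_entry_le {α μ ν : ℝ} (hμα : μ < α) (hν : 0 ≤ ν) (hνα : ν ≤ (α - μ) / 2)
    {h : G → ℝ} (hh : LipschitzWith 1 h) (n m : G) :
    ‖((Real.exp (ν * (h n - h m)) - 1 : ℝ) : ℂ) * Hmat H n m‖ ^ 2
      ≤ offDiagWeight H α n m * ((2 * ν / (α - μ)) ^ 2 * supportWeight H μ n m) := by
  have hRHS : 0 ≤ offDiagWeight H α n m * ((2 * ν / (α - μ)) ^ 2 * supportWeight H μ n m) :=
    mul_nonneg (offDiagWeight_nonneg α n m) (mul_nonneg (sq_nonneg _) (supportWeight_nonneg μ n m))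
  rcases eq_or_ne m n with rfl | hmn
  · simpa using hRHS
  rcases eq_or_ne (Hmat H n m) 0 with hH | hH
  · simpa [hH] using hRHS
  have hx : |ν * (h n - h m)| ≤ ν * dist n m := by
    rw [abs_mul, abs_of_nonneg hν, ← Real.dist_eq]
    gcongr
    simpa using hh.dist_le_mul n m
  have hexp := abs_exp_sub_one_le_of_abs_le hν hνα (by linarith) hx
  rw [show ν / ((α - μ) / 2) = 2 * ν / (α - μ) by field_simp] at hexp
  simp only [offDiagWeight, supportWeight, Set.indicator_of_mem (show m ∈ {m' | m' ≠ n} from hmn),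
    Set.indicator_of_mem (show n ∈ {n' | Hmat H n' m ≠ 0} from hH)]
  calc ‖((Real.exp (ν * (h n - h m)) - 1 : ℝ) : ℂ) * Hmat H n m‖ ^ 2
      = |Real.exp (ν * (h n - h m)) - 1| ^ 2 * ‖Hmat H n m‖ ^ 2 := by
        rw [norm_mul, Complex.norm_real, Real.norm_eq_abs, mul_pow]
    _ ≤ (2 * ν / (α - μ) * Real.exp ((α - μ) / 2 * dist n m)) ^ 2 * ‖Hmat H n m‖ ^ 2 := by
        gcongr
    _ = _ := by
        have : Real.exp ((α - μ) / 2 * dist n m) ^ 2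
            = Real.exp (α * dist n m) * Real.exp (-μ * dist n m) := by
          rw [← Real.exp_nat_mul, ← Real.exp_add]; push_cast; ring_nf
        rw [mul_pow, this]
        ring

lemma norm_apply_le_of_finsupp {α μ ν Mα a b : ℝ} (hμα : μ < α) (hν : 0 ≤ ν)
    (hνα : ν ≤ (α - μ) / 2) (hMα : 0 ≤ Mα) (ha : 0 ≤ a) (hb : 0 ≤ b)
    (hMsummable : ∀ n, Summable (offDiagWeight H α n))
    (hM : ∀ n, ∑' m, offDiagWeight H α n m ≤ Mα ^ 2)
    (hFsummable : ∀ m, Summable fun n => supportWeight H μ n m)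
    {h : G → ℝ} (hh : LipschitzWith 1 h) {B : ℓ²(G) →L[ℂ] ℓ²(G)}
    (hB : ∀ m n, B (lp.single 2 m 1) n = ((Real.exp (ν * (h n - h m)) - 1 : ℝ) : ℂ) * Hmat H n m)
    {t : Finset G} {χ : ℓ²(G)} (hχ : ∀ m ∉ t, χ m = 0)
    (hF : ∑ m ∈ t, (∑' n, supportWeight H μ n m) * ‖χ m‖ ^ 2 ≤ (a * ‖H χ‖ + b * ‖χ‖) ^ 2) :
    ‖B χ‖ ≤ Mα * (2 * ν / (α - μ) * (a * ‖H χ‖ + b * ‖χ‖)) := by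
  set K := 2 * ν / (α - μ)
  have hK : 0 ≤ K := div_nonneg (by positivity) (by linarith)
  refine norm_apply_le_of_schur B hχ (U := offDiagWeight H α)
    (V := fun n m => K ^ 2 * supportWeight H μ n m) (offDiagWeight_nonneg α)
    (fun n m => mul_nonneg (sq_nonneg K) (supportWeight_nonneg μ n m))
    (fun n m => (hB m n).symm ▸ norm_sq_entry_le hμα hν hνα hh n m) hMα (by positivity)
    (fun n => ((hMsummable n).sum_le_tsum t fun m _ => offDiagWeight_nonneg α n m).trans (hM n))
    fun s => ?_
  calc ∑ m ∈ t, (∑ n ∈ s, K ^ 2 * supportWeight H μ n m) * ‖χ m‖ ^ 2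
      ≤ ∑ m ∈ t, K ^ 2 * (∑' n, supportWeight H μ n m) * ‖χ m‖ ^ 2 := by
        gcongr with m
        rw [← Finset.mul_sum]
        gcongr
        exact (hFsummable m).sum_le_tsum s fun n _ => supportWeight_nonneg μ n m
    _ = K ^ 2 * ∑ m ∈ t, (∑' n, supportWeight H μ n m) * ‖χ m‖ ^ 2 := by
        simp only [Finset.mul_sum, mul_assoc]
    _ ≤ K ^ 2 * (a * ‖H χ‖ + b * ‖χ‖) ^ 2 := by gcongr
    _ = (K * (a * ‖H χ‖ + b * ‖χ‖)) ^ 2 := by ring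

lemma norm_apply_le {α μ ν Mα a b : ℝ} (hμα : μ < α) (hν : 0 ≤ ν)
    (hνα : ν ≤ (α - μ) / 2) (hMα : 0 ≤ Mα) (ha : 0 ≤ a) (hb : 0 ≤ b)
    (hMsummable : ∀ n, Summable (offDiagWeight H α n))
    (hM : ∀ n, ∑' m, offDiagWeight H α n m ≤ Mα ^ 2)
    (hFsummable : ∀ m, Summable fun n => supportWeight H μ n m)
    (hF : ∀ ψ : ℓ²(G), (Function.support fun n : G => ψ n).Finite →
      (∑' m : G, ENNReal.ofReal ((∑' n, supportWeight H μ n m) * ‖ψ m‖ ^ 2))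
        ≤ ENNReal.ofReal ((a * ‖H ψ‖ + b * ‖ψ‖) ^ 2))
    {h : G → ℝ} (hh : LipschitzWith 1 h) {B : ℓ²(G) →L[ℂ] ℓ²(G)}
    (hB : ∀ m n, B (lp.single 2 m 1) n = ((Real.exp (ν * (h n - h m)) - 1 : ℝ) : ℂ) * Hmat H n m)
    (χ : ℓ²(G)) :
    ‖B χ‖ ≤ 2 * Mα * ν / (α - μ) * (a * ‖H χ‖ + b * ‖χ‖) := by
  refine le_of_forall_finsupp (u := fun χ => ‖B χ‖)
    (v := fun χ => 2 * Mα * ν / (α - μ) * (a * ‖H χ‖ + b * ‖χ‖)) (by fun_prop) (by fun_prop)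
    (fun t χ hχ => ?_) χ
  have hsupp : (Function.support fun n => χ n).Finite :=
    t.finite_toSet.subset fun n hn => by_contra fun hnt => hn (hχ n hnt)
  refine (norm_apply_le_of_finsupp hμα hν hνα hMα ha hb hMsummable hM hFsummable hh hB hχ
    (sum_le_of_tsum_ofReal_le (fun m => mul_nonneg (tsum_nonneg fun n => supportWeight_nonneg μ n m)
      (sq_nonneg _)) (sq_nonneg _) (hF χ hsupp) t)).trans_eq ?_
  ring

theorem norm_inner_resolvent_le {α μ ν Mα a b : ℝ} (hμα : μ < α) (hν : 0 ≤ ν)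
    (hνα : ν ≤ (α - μ) / 2) (hMα : 0 ≤ Mα) (ha : 0 ≤ a) (hb : 0 ≤ b)
    (hMsummable : ∀ n, Summable (offDiagWeight H α n))
    (hM : ∀ n, ∑' m, offDiagWeight H α n m ≤ Mα ^ 2)
    (hFsummable : ∀ m, Summable fun n => supportWeight H μ n m)
    (hF : ∀ ψ : ℓ²(G), (Function.support fun n : G => ψ n).Finite →
      (∑' m : G, ENNReal.ofReal ((∑' n, supportWeight H μ n m) * ‖ψ m‖ ^ 2))
        ≤ ENNReal.ofReal ((a * ‖H ψ‖ + b * ‖ψ‖) ^ 2))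
    {z : ℂ} (hz : IsUnit (H - algebraMap ℂ (ℓ²(G) →L[ℂ] ℓ²(G)) z))
    (hc : 2 * Mα * ν * (a * ‖H ∘L Ring.inverse (H - algebraMap ℂ (ℓ²(G) →L[ℂ] ℓ²(G)) z)‖
      + b * ‖Ring.inverse (H - algebraMap ℂ (ℓ²(G) →L[ℂ] ℓ²(G)) z)‖) < α - μ)
    {h : G → ℝ} (hh : LipschitzWith 1 h) {D : ℝ} (hh0 : ∀ n, 0 ≤ h n) (hhD : ∀ n, h n ≤ D)
    {S T : Set G} (hS : ∀ n ∈ S, h n = D) (hT : ∀ n ∈ T, h n = 0) {φ ψ : ℓ²(G)}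
    (hφ : ∀ n ∉ S, φ n = 0) (hψ : ∀ n ∉ T, ψ n = 0) :
    ‖⟪φ, (Ring.inverse (H - algebraMap ℂ (ℓ²(G) →L[ℂ] ℓ²(G)) z)) ψ⟫_ℂ‖
      ≤ ‖Ring.inverse (H - algebraMap ℂ (ℓ²(G) →L[ℂ] ℓ²(G)) z)‖ /
          (1 - (2 * Mα * ν / (α - μ)) *
            (a * ‖H ∘L Ring.inverse (H - algebraMap ℂ (ℓ²(G) →L[ℂ] ℓ²(G)) z)‖
              + b * ‖Ring.inverse (H - algebraMap ℂ (ℓ²(G) →L[ℂ] ℓ²(G)) z)‖)) *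
        Real.exp (-ν * D) * ‖φ‖ * ‖ψ‖ := by
  set z' := algebraMap ℂ (ℓ²(G) →L[ℂ] ℓ²(G)) z
  set R := Ring.inverse (H - z')
  set c := 2 * Mα * ν / (α - μ) * (a * ‖H ∘L R‖ + b * ‖R‖)
  have hc1 : c < 1 := by
    rwa [show c = 2 * Mα * ν * (a * ‖H ∘L R‖ + b * ‖R‖) / (α - μ) by ring,
      div_lt_one (by linarith)]
  have hf : ∀ n, ν * h n ≤ ν * D := fun n => mul_le_mul_of_nonneg_left (hhD n) hν
  have hg : ∀ n, -(ν * h n) ≤ 0 := fun n => neg_nonpos.2 (mul_nonneg hν (hh0 n))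
  set W := expMul (fun n => ν * h n) hf
  set W' := expMul (fun n => -(ν * h n)) hg
  have hWW' : W * W' = 1 := expMul_mul_expMul hf hg fun n => add_neg_cancel _
  have hW'W : W' * W = 1 := expMul_mul_expMul hg hf fun n => neg_add_cancel _
  have hB : ∀ χ, ‖(W * H * W' - H) χ‖ ≤ 2 * Mα * ν / (α - μ) * (a * ‖H χ‖ + b * ‖χ‖) :=
    norm_apply_le hμα hν hνα hMα ha hb hMsummable hM hFsummable hF hh
      (expMul_conj_sub_single_apply hf hg H)
  have hconj : W * (H - z') * W' - (H - z') = W * H * W' - H := by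
    simp only [mul_sub, sub_mul, z', ← Algebra.commutes z W, mul_assoc, hWW', mul_one]
    abel
  have hBR : ‖(W * (H - z') * W' - (H - z')) * R‖ ≤ c := by
    rw [hconj]
    exact norm_mul_le_of_forall_norm_apply_le (by positivity) ha hb hB R
  have hWRW' : ‖W * R * W'‖ ≤ ‖R‖ / (1 - c) :=
    norm_mul_inverse_mul_le ContinuousLinearMap.norm_id_le hz hWW' hW'W hBR hc1
  rw [inner_apply_eq_exp_mul_inner_conj hf hg R (c := ν * D) (fun n hn => by rw [hS n hn])
    (fun n hn => by rw [hT n hn, mul_zero]) hφ hψ, norm_mul, Complex.norm_real, Real.norm_eq_abs,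
    Real.abs_exp, neg_mul]
  calc Real.exp (-(ν * D)) * ‖⟪φ, (W * R * W') ψ⟫_ℂ‖
      ≤ Real.exp (-(ν * D)) * (‖φ‖ * (‖W * R * W'‖ * ‖ψ‖)) := by
        gcongr
        exact (norm_inner_le_norm _ _).trans (by gcongr; exact (W * R * W').le_opNorm ψ)
    _ ≤ Real.exp (-(ν * D)) * (‖φ‖ * (‖R‖ / (1 - c) * ‖ψ‖)) := by gcongr
    _ = ‖R‖ / (1 - c) * Real.exp (-(ν * D)) * ‖φ‖ * ‖ψ‖ := by ring

end kernel

end CombesThomas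

theorem stmt15_general {G : Type*} [MetricSpace G] [DecidableEq G]
    (H : lp (fun _ : G => ℂ) 2 →L[ℂ] lp (fun _ : G => ℂ) 2)
    (α μ : ℝ) (hμα : μ < α)
    (Mα a b : ℝ) (hMα : 0 < Mα) (ha : 0 ≤ a) (hb : 0 ≤ b)
    (hMsummable : ∀ n : G, Summable fun m : G =>
      Set.indicator {m' : G | m' ≠ n}
        (fun m' => ‖Hmat H n m'‖ ^ 2 * Real.exp (α * dist n m')) m)
    (hM : ∀ n : G,
      (∑' m : G, Set.indicator {m' : G | m' ≠ n}
          (fun m' => ‖Hmat H n m'‖ ^ 2 * Real.exp (α * dist n m')) m) ≤ Mα ^ 2)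
    (hFsummable : ∀ m : G, Summable fun n : G =>
      Set.indicator {n' : G | Hmat H n' m ≠ 0} (fun n' => Real.exp (-μ * dist n' m)) n)
    (hF : ∀ ψ : lp (fun _ : G => ℂ) 2, (Function.support fun n : G => ψ n).Finite →
      (∑' m : G, ENNReal.ofReal
          ((∑' n : G, Set.indicator {n' : G | Hmat H n' m ≠ 0}
              (fun n' => Real.exp (-μ * dist n' m)) n) * ‖ψ m‖ ^ 2))
        ≤ ENNReal.ofReal ((a * ‖H ψ‖ + b * ‖ψ‖) ^ 2))
    (z : ℂ) (hz : z ∉ spectrum ℂ H)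
    (ν : ℝ) (hν0 : 0 ≤ ν)
    (hν1 : ν < (α - μ) / 2)
    (hν3 : 2 * Mα * ν *
        (a * ‖H ∘L Ring.inverse (H - algebraMap ℂ (lp (fun _ : G => ℂ) 2 →L[ℂ] lp (fun _ : G => ℂ) 2) z)‖
          + b * ‖Ring.inverse (H - algebraMap ℂ (lp (fun _ : G => ℂ) 2 →L[ℂ] lp (fun _ : G => ℂ) 2) z)‖)
      < α - μ)
    (S T : Set G) (φ ψ : lp (fun _ : G => ℂ) 2)
    (hφ : ∀ n ∉ S, φ n = 0) (hψ : ∀ n ∉ T, ψ n = 0) :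
    ‖⟪φ, (Ring.inverse (H - algebraMap ℂ (lp (fun _ : G => ℂ) 2 →L[ℂ] lp (fun _ : G => ℂ) 2) z)) ψ⟫_ℂ‖
      ≤ (‖Ring.inverse (H - algebraMap ℂ (lp (fun _ : G => ℂ) 2 →L[ℂ] lp (fun _ : G => ℂ) 2) z)‖ /
            (1 - (2 * Mα * ν / (α - μ)) *
              (a * ‖H ∘L Ring.inverse (H - algebraMap ℂ (lp (fun _ : G => ℂ) 2 →L[ℂ] lp (fun _ : G => ℂ) 2) z)‖
                + b * ‖Ring.inverse (H - algebraMap ℂ (lp (fun _ : G => ℂ) 2 →L[ℂ] lp (fun _ : G => ℂ) 2) z)‖))) *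
          Real.exp (-ν * sInf ((fun p : G × G => dist p.1 p.2) '' S ×ˢ T)) * ‖φ‖ * ‖ψ‖ := by
  have hD : 0 ≤ sInf ((fun p : G × G => dist p.1 p.2) '' S ×ˢ T) :=
    Real.sInf_nonneg (by rintro _ ⟨p, _, rfl⟩; exact dist_nonneg)
  have hunit : IsUnit (H - algebraMap ℂ (lp (fun _ : G => ℂ) 2 →L[ℂ] lp (fun _ : G => ℂ) 2) z) := by
    simpa using (spectrum.notMem_iff.1 hz).neg
  exact CombesThomas.norm_inner_resolvent_le hμα hν0 hν1.le hMα.le ha hb hMsummable hM hFsummable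
    hF hunit hν3 ((Metric.lipschitz_infDist_pt T).min_const _)
    (fun n => le_min Metric.infDist_nonneg hD) (fun n => min_le_right _ _)
    (fun n hn => min_eq_right (CombesThomas.sInf_image_dist_prod_le_infDist hn))
    (fun n hn => by rw [Metric.infDist_zero_of_mem hn]; exact min_eq_left hD) hφ hψ

/-- Abstract Combes–Thomas bound.  H is a self-adjoint operator on ℓ²(G) whose
kernel satisfies  ∑_{m≠n}|⟨n|H|m⟩|² e^{α d(n,m)} ≤ M_α² uniformly in n, and the
multiplication operator F_μ(m)² = ∑_{n : ⟨n|H|m⟩≠0} e^{−μ d(n,m)} (μ < α) is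
relatively H-bounded with constants a, b.  Then for z ∉ σ(H), 0 ≤ ν obeying
ν < ((α−μ)/(2M_α))·min{M_α, 1/a, 1/(a‖H(H−z)⁻¹‖+b‖(H−z)⁻¹‖)} (stated in
product form to handle a = 0), and any S, T ⊆ G:
‖P_S (H−z)⁻¹ P_T‖ ≤ A_{z;ν} e^{−ν d(S,T)}, expressed via vectors supported in
S and T respectively. -/
theorem stmt15 {G : Type*} [Countable G] [MetricSpace G] [DecidableEq G]
    (H : lp (fun _ : G => ℂ) 2 →L[ℂ] lp (fun _ : G => ℂ) 2)
    (hH : IsSelfAdjoint H)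
    (α μ : ℝ) (hα : 0 < α) (hμα : μ < α)
    (Mα a b : ℝ) (hMα : 0 < Mα) (ha : 0 ≤ a) (hb : 0 ≤ b)
    (hMsummable : ∀ n : G, Summable fun m : G =>
      Set.indicator {m' : G | m' ≠ n}
        (fun m' => ‖Hmat H n m'‖ ^ 2 * Real.exp (α * dist n m')) m)
    (hM : ∀ n : G,
      (∑' m : G, Set.indicator {m' : G | m' ≠ n}
          (fun m' => ‖Hmat H n m'‖ ^ 2 * Real.exp (α * dist n m')) m) ≤ Mα ^ 2)
    (hFsummable : ∀ m : G, Summable fun n : G =>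
      Set.indicator {n' : G | Hmat H n' m ≠ 0} (fun n' => Real.exp (-μ * dist n' m)) n)
    (hF : ∀ ψ : lp (fun _ : G => ℂ) 2, (Function.support fun n : G => ψ n).Finite →
      (∑' m : G, ENNReal.ofReal
          ((∑' n : G, Set.indicator {n' : G | Hmat H n' m ≠ 0}
              (fun n' => Real.exp (-μ * dist n' m)) n) * ‖ψ m‖ ^ 2))
        ≤ ENNReal.ofReal ((a * ‖H ψ‖ + b * ‖ψ‖) ^ 2))
    (z : ℂ) (hz : z ∉ spectrum ℂ H)
    (ν : ℝ) (hν0 : 0 ≤ ν)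
    (hν1 : ν < (α - μ) / 2)
    (hν2 : 2 * Mα * a * ν < α - μ)
    (hν3 : 2 * Mα * ν *
        (a * ‖H ∘L Ring.inverse (H - algebraMap ℂ (lp (fun _ : G => ℂ) 2 →L[ℂ] lp (fun _ : G => ℂ) 2) z)‖
          + b * ‖Ring.inverse (H - algebraMap ℂ (lp (fun _ : G => ℂ) 2 →L[ℂ] lp (fun _ : G => ℂ) 2) z)‖)
      < α - μ)
    (S T : Set G) (φ ψ : lp (fun _ : G => ℂ) 2)
    (hφ : ∀ n ∉ S, φ n = 0) (hψ : ∀ n ∉ T, ψ n = 0) :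
    ‖⟪φ, (Ring.inverse (H - algebraMap ℂ (lp (fun _ : G => ℂ) 2 →L[ℂ] lp (fun _ : G => ℂ) 2) z)) ψ⟫_ℂ‖
      ≤ (‖Ring.inverse (H - algebraMap ℂ (lp (fun _ : G => ℂ) 2 →L[ℂ] lp (fun _ : G => ℂ) 2) z)‖ /
            (1 - (2 * Mα * ν / (α - μ)) *
              (a * ‖H ∘L Ring.inverse (H - algebraMap ℂ (lp (fun _ : G => ℂ) 2 →L[ℂ] lp (fun _ : G => ℂ) 2) z)‖
                + b * ‖Ring.inverse (H - algebraMap ℂ (lp (fun _ : G => ℂ) 2 →L[ℂ] lp (fun _ : G => ℂ) 2) z)‖))) *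
          Real.exp (-ν * sInf ((fun p : G × G => dist p.1 p.2) '' S ×ˢ T)) * ‖φ‖ * ‖ψ‖ :=
  stmt15_general H α μ hμα Mα a b hMα ha hb hMsummable hM hFsummable hF z hz ν hν0 hν1 hν3 S T φ ψ
    hφ hψ
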